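/- Let x,y,z ≥ 0 with x ≤ 1 and 2y+z ≤ 1, and let p₁,p₂,p₃,p₄ ≥ 0 with p₁+p₂+p₃+p₄ = 1. Then for ρ = diag(p₁,p₂,p₃,p₄), the coherent information I_coh(Φ_{x,y,z}, ρ) = S(Φ_{x,y,z}(ρ)) − S(Φ_{x,y,z}^C(ρ)) equals η(p₁ + p₂x + p₃x + p₄z) + η(p₂(1−x) + p₄y) + η(p₃(1−x) + p₄y) + η(p₄(1−2y−z)) − η(p₁ + p₂(1−x) + p₃(1−x) + p₄(1−2y−z)) − η(p₂x + p₄y) − η(p₃x + p₄y) − η(p₄z). -/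

import Mathlib

open Matrix

/-- `η(t) = −t·log t / log 2` for `t > 0`, and `0` otherwise. -/
noncomputable def eta (t : ℝ) : ℝ := if 0 < t then -t * Real.log t / Real.log 2 else 0

/-- The von Neumann entropy of a (Hermitian) matrix: the sum of `η` over its eigenvalues. -/
noncomputable def vnEntropy {n : Type*} [Fintype n] [DecidableEq n] (ρ : Matrix n n ℂ) : ℝ :=
  if h : ρ.IsHermitian then ∑ i, eta (h.eigenvalues i) else 0

/-- Kraus operators `A_0, …, A_3` of the two-qubit amplitude damping channel `Φ_{x,y,z}`,
in the standard basis `e_0, …, e_3` of `ℂ⁴`. -/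
noncomputable def ADkraus (x y z : ℝ) : Fin 4 → Matrix (Fin 4) (Fin 4) ℂ
  | 0 => Matrix.diagonal ![1, (Real.sqrt (1 - x) : ℂ), (Real.sqrt (1 - x) : ℂ),
          (Real.sqrt (1 - 2*y - z) : ℂ)]
  | 1 => Matrix.single 0 1 (Real.sqrt x : ℂ) + Matrix.single 2 3 (Real.sqrt y : ℂ)
  | 2 => Matrix.single 0 2 (Real.sqrt x : ℂ) + Matrix.single 1 3 (Real.sqrt y : ℂ)
  | 3 => Matrix.single 0 3 (Real.sqrt z : ℂ)

/-! The Kraus operators map every basis vector to a multiple of a basis vector, and distinct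
operators never send the same `e_l` to the same line, so both `Φ` and `Φ^C` send diagonal states
to diagonal matrices; the entropy of a diagonal matrix is the sum of `η` over its diagonal. -/

open Finset

open Polynomial in
theorem Matrix.IsHermitian.eigenvalues_diagonal_multiset {𝕜 n : Type*} [RCLike 𝕜] [Fintype n]
    [DecidableEq n] {d : n → ℝ} (hA : (diagonal fun i => (d i : 𝕜)).IsHermitian) :
    univ.val.map hA.eigenvalues = univ.val.map d := by
  have hroots := hA.roots_charpoly_eq_eigenvalues
  rw [charpoly_diagonal, roots_prod _ _ (by simp [prod_ne_zero_iff, X_sub_C_ne_zero])] at hroots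
  simp only [roots_X_sub_C, Multiset.bind_singleton, ← Multiset.map_map] at hroots
  exact Multiset.map_injective RCLike.ofReal_injective
    (hroots.symm.trans (Multiset.map_map _ _ _).symm)

theorem vnEntropy_diagonal {n : Type*} [Fintype n] [DecidableEq n] (d : n → ℝ) :
    vnEntropy (diagonal fun i => (d i : ℂ)) = ∑ i, eta (d i) := by
  have hA : (diagonal fun i => (d i : ℂ)).IsHermitian :=
    isHermitian_diagonal_iff.mpr fun i => Complex.conj_ofReal (d i)
  rw [vnEntropy, dif_pos hA]
  simpa only [Multiset.map_map, Function.comp_def, sum_map_val] using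
    congrArg (fun s => (s.map eta).sum) hA.eigenvalues_diagonal_multiset

section KrausMaps

variable {ι m n α : Type*} [Fintype n] [DecidableEq n] [CommSemiring α] [StarRing α]

def krausMap [Fintype ι] (A : ι → Matrix m n α) (ρ : Matrix n n α) : Matrix m m α :=
  ∑ i, A i * ρ * (A i)ᴴ

def complementaryMap [Fintype m] (A : ι → Matrix m n α) (ρ : Matrix n n α) : Matrix ι ι α :=
  of fun j k => (A j * ρ * (A k)ᴴ).trace

theorem krausMap_diagonal_apply [Fintype ι] (A : ι → Matrix m n α) (d : n → α) (j k : m) :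
    krausMap A (diagonal d) j k = ∑ i, ∑ l, A i j l * d l * star (A i k l) := by
  simp [krausMap, Matrix.sum_apply, mul_apply, diagonal_apply]

theorem complementaryMap_diagonal_apply [Fintype m] (A : ι → Matrix m n α) (d : n → α)
    (j k : ι) :
    complementaryMap A (diagonal d) j k = ∑ p, ∑ l, A j p l * d l * star (A k p l) := by
  simp [complementaryMap, trace, mul_apply, diagonal_apply]

end KrausMaps

theorem Complex.ofReal_sqrt_mul_mul_ofReal_sqrt {a : ℝ} (ha : 0 ≤ a) (b : ℂ) :
    (√a : ℂ) * b * √a = b * a := by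
  rw [mul_right_comm, ← ofReal_mul, Real.mul_self_sqrt ha, mul_comm]

section AmplitudeDamping

variable {x y z : ℝ}

theorem krausMap_ADkraus_diagonal (hx0 : 0 ≤ x) (hy0 : 0 ≤ y) (hz0 : 0 ≤ z) (hx1 : x ≤ 1)
    (hyz : 2*y + z ≤ 1) (p₁ p₂ p₃ p₄ : ℝ) :
    krausMap (ADkraus x y z) (diagonal ![(p₁ : ℂ), (p₂ : ℂ), (p₃ : ℂ), (p₄ : ℂ)])
      = diagonal fun i => ((![p₁ + p₂ * x + p₃ * x + p₄ * z, p₂ * (1 - x) + p₄ * y,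
          p₃ * (1 - x) + p₄ * y, p₄ * (1 - 2*y - z)] : Fin 4 → ℝ) i : ℂ) := by
  have h1x : 0 ≤ 1 - x := by linarith
  have h1yz : 0 ≤ 1 - 2*y - z := by linarith
  ext j k
  rw [krausMap_diagonal_apply]
  fin_cases j <;> fin_cases k <;>
    simp [ADkraus, Fin.sum_univ_four, Complex.ofReal_sqrt_mul_mul_ofReal_sqrt, hx0, hy0, hz0,
      h1x, h1yz]

theorem complementaryMap_ADkraus_diagonal (hx0 : 0 ≤ x) (hy0 : 0 ≤ y) (hz0 : 0 ≤ z) (hx1 : x ≤ 1)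
    (hyz : 2*y + z ≤ 1) (p₁ p₂ p₃ p₄ : ℝ) :
    complementaryMap (ADkraus x y z) (diagonal ![(p₁ : ℂ), (p₂ : ℂ), (p₃ : ℂ), (p₄ : ℂ)])
      = diagonal fun i => ((![p₁ + p₂ * (1 - x) + p₃ * (1 - x) + p₄ * (1 - 2*y - z),
          p₂ * x + p₄ * y, p₃ * x + p₄ * y, p₄ * z] : Fin 4 → ℝ) i : ℂ) := by
  have h1x : 0 ≤ 1 - x := by linarith
  have h1yz : 0 ≤ 1 - 2*y - z := by linarith
  ext j k
  rw [complementaryMap_diagonal_apply]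
  fin_cases j <;> fin_cases k <;>
    simp [ADkraus, Fin.sum_univ_four, Complex.ofReal_sqrt_mul_mul_ofReal_sqrt, hx0, hy0, hz0,
      h1x, h1yz]

end AmplitudeDamping

theorem coherent_information_on_diagonal_states_general (x y z p₁ p₂ p₃ p₄ : ℝ)
    (hx0 : 0 ≤ x) (hy0 : 0 ≤ y) (hz0 : 0 ≤ z) (hx1 : x ≤ 1) (hyz : 2*y + z ≤ 1) :
    vnEntropy (∑ i : Fin 4,
        ADkraus x y z i * Matrix.diagonal ![(p₁ : ℂ), (p₂ : ℂ), (p₃ : ℂ), (p₄ : ℂ)] *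
          (ADkraus x y z i)ᴴ)
      - vnEntropy (Matrix.of fun j k : Fin 4 =>
          (ADkraus x y z j * Matrix.diagonal ![(p₁ : ℂ), (p₂ : ℂ), (p₃ : ℂ), (p₄ : ℂ)] *
            (ADkraus x y z k)ᴴ).trace)
    = eta (p₁ + p₂ * x + p₃ * x + p₄ * z) + eta (p₂ * (1 - x) + p₄ * y)
      + eta (p₃ * (1 - x) + p₄ * y) + eta (p₄ * (1 - 2*y - z))
      - eta (p₁ + p₂ * (1 - x) + p₃ * (1 - x) + p₄ * (1 - 2*y - z))
      - eta (p₂ * x + p₄ * y) - eta (p₃ * x + p₄ * y) - eta (p₄ * z) := by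
  change vnEntropy (krausMap _ _) - vnEntropy (complementaryMap _ _) = _
  rw [krausMap_ADkraus_diagonal hx0 hy0 hz0 hx1 hyz,
    complementaryMap_ADkraus_diagonal hx0 hy0 hz0 hx1 hyz, vnEntropy_diagonal,
    vnEntropy_diagonal, Fin.sum_univ_four, Fin.sum_univ_four]
  simp only [cons_val_zero, cons_val_one, cons_val_two, cons_val_three, head_cons, tail_cons]
  ring

/-- For `ρ = diag(p₁,p₂,p₃,p₄)`, the coherent information
`I_coh(Φ_{x,y,z}, ρ) = S(Φ_{x,y,z}(ρ)) − S(Φ_{x,y,z}^C(ρ))` is the stated combination of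
values of `η`. -/
theorem coherent_information_on_diagonal_states (x y z p₁ p₂ p₃ p₄ : ℝ)
    (hx0 : 0 ≤ x) (hy0 : 0 ≤ y) (hz0 : 0 ≤ z) (hx1 : x ≤ 1) (hyz : 2*y + z ≤ 1)
    (hp1 : 0 ≤ p₁) (hp2 : 0 ≤ p₂) (hp3 : 0 ≤ p₃) (hp4 : 0 ≤ p₄)
    (hpsum : p₁ + p₂ + p₃ + p₄ = 1) :
    vnEntropy (∑ i : Fin 4,
        ADkraus x y z i * Matrix.diagonal ![(p₁ : ℂ), (p₂ : ℂ), (p₃ : ℂ), (p₄ : ℂ)] *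
          (ADkraus x y z i)ᴴ)
      - vnEntropy (Matrix.of fun j k : Fin 4 =>
          (ADkraus x y z j * Matrix.diagonal ![(p₁ : ℂ), (p₂ : ℂ), (p₃ : ℂ), (p₄ : ℂ)] *
            (ADkraus x y z k)ᴴ).trace)
    = eta (p₁ + p₂ * x + p₃ * x + p₄ * z) + eta (p₂ * (1 - x) + p₄ * y)
      + eta (p₃ * (1 - x) + p₄ * y) + eta (p₄ * (1 - 2*y - z))
      - eta (p₁ + p₂ * (1 - x) + p₃ * (1 - x) + p₄ * (1 - 2*y - z))
      - eta (p₂ * x + p₄ * y) - eta (p₃ * x + p₄ * y) - eta (p₄ * z) :=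
  coherent_information_on_diagonal_states_general x y z p₁ p₂ p₃ p₄ hx0 hy0 hz0 hx1 hyz
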